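/- For every k ≥ 2, every vertex of V(G_k) not belonging to the generation U_{k-1} has a neighbor in U_{k-1} in the Apollonian network G_k. -/

import Mathlib

/-- A family of Apollonian networks, given by a vertex set `Vert` together with a
generation labeling `gen` and an adjacency relation `adj`, satisfying the recursive
construction: the first generation `U₁` consists of three pairwise adjacent vertices
(forming `G₁`); and for each `k ≥ 1`, for each vertex `u` of generation `k` and each
adjacent pair `{x, y}` of neighbors of `u` in `G_k`, exactly one new vertex of
generation `k + 1` is created, adjacent to exactly `u`, `x`, and `y`.
The `k`-th Apollonian network `G_k` is the induced subgraph on the vertices of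
generation at most `k`. -/
structure ApollonianNetwork where
  Vert : Type
  adj : Vert → Vert → Prop
  adj_symm : ∀ a b, adj a b → adj b a
  adj_irrefl : ∀ a, ¬ adj a a
  gen : Vert → ℕ
  gen_pos : ∀ v, 1 ≤ gen v
  /-- The first generation consists of exactly three vertices. -/
  U1_card : ∃ a b c : Vert, a ≠ b ∧ a ≠ c ∧ b ≠ c ∧ {v | gen v = 1} = {a, b, c}
  /-- `G₁` is a complete graph on the first generation. -/
  U1_complete : ∀ a b, gen a = 1 → gen b = 1 → a ≠ b → adj a b
  /-- All edges join vertices of distinct generations, except within generation 1. -/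
  adj_gen : ∀ a b, adj a b → gen a = gen b → gen a = 1
  /-- Every vertex `v` of generation `k ≥ 2` is adjacent, among the vertices of earlier
  generations, to exactly three vertices `u`, `x`, `y`, where `u` has generation `k - 1`
  and `x`, `y` are neighbors of `u` in `G_{k-1}` that are adjacent to each other. -/
  created : ∀ v, 2 ≤ gen v → ∃ u x y,
    gen u = gen v - 1 ∧ gen x ≤ gen v - 1 ∧ gen y ≤ gen v - 1 ∧
    adj u x ∧ adj u y ∧ adj x y ∧
    {w | adj v w ∧ gen w < gen v} = {u, x, y}
  /-- For each `k ≥ 1`, each vertex `u` of generation `k`, and each adjacent pair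
  `{x, y}` of neighbors of `u` in `G_k`, there is exactly one vertex of generation
  `k + 1` whose neighbors in `G_{k+1}` are exactly `u`, `x`, and `y`. -/
  attach : ∀ k, 1 ≤ k → ∀ u x y,
    gen u = k → gen x ≤ k → gen y ≤ k → x ≠ y →
    adj u x → adj u y → adj x y →
    ∃! v, gen v = k + 1 ∧ {w | adj v w ∧ gen w ≤ k} = ({u, x, y} : Set Vert)

/-- The `k`-th Apollonian network `G_k`: the induced subgraph on the vertices of
generation at most `k`. -/
def ApollonianNetwork.G (A : ApollonianNetwork) (k : ℕ) :
    SimpleGraph {v : A.Vert // A.gen v ≤ k} where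
  Adj a b := A.adj a b
  symm := ⟨fun a b h => A.adj_symm a b h⟩
  loopless := ⟨fun a h => A.adj_irrefl a h⟩

/-!
Call a triangle `u x y` *active at level `j`* if `u` has generation `j` and `x`, `y` have
generation at most `j`: these are the triangles that receive a new vertex of generation `j + 1`.
By induction on `j`, every vertex of `G_j` lies in a triangle active at level `j`. Hence a vertex
of generation at most `k - 2` is adjacent to the vertex of generation `k - 1` attached to such a
triangle, while a vertex of generation `k` is adjacent to the generation-`(k - 1)` vertex it was
attached to.
-/

namespace ApollonianNetwork

variable (A : ApollonianNetwork)

lemma adj_ne {a b : A.Vert} (h : A.adj a b) : a ≠ b := by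
  rintro rfl
  exact A.adj_irrefl a h

def IsActiveTriangle (j : ℕ) (u x y : A.Vert) : Prop :=
  A.gen u = j ∧ A.gen x ≤ j ∧ A.gen y ≤ j ∧ A.adj u x ∧ A.adj u y ∧ A.adj x y

variable {A}

lemma IsActiveTriangle.exists_adj_gen_succ {j : ℕ} (hj : 1 ≤ j) {u x y : A.Vert}
    (h : A.IsActiveTriangle j u x y) :
    ∃ w, A.gen w = j + 1 ∧ A.adj w u ∧ A.adj w x ∧ A.adj w y := by
  obtain ⟨hu, hx, hy, hux, huy, hxy⟩ := h
  obtain ⟨w, ⟨hw, hnbrs⟩, -⟩ := A.attach j hj u x y hu hx hy (A.adj_ne hxy) hux huy hxy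
  have hadj : ∀ z ∈ ({u, x, y} : Set A.Vert), A.adj w z := fun z hz => (hnbrs ▸ hz).1
  exact ⟨w, hw, hadj u (by simp), hadj x (by simp), hadj y (by simp)⟩

variable (A)

lemma exists_adj_parent (v : A.Vert) (hv : 2 ≤ A.gen v) :
    ∃ u x, A.gen u = A.gen v - 1 ∧ A.gen x ≤ A.gen v - 1 ∧
      A.adj v u ∧ A.adj v x ∧ A.adj u x := by
  obtain ⟨u, x, y, hu, hx, -, hux, -, -, hnbrs⟩ := A.created v hv
  have hadj : ∀ z ∈ ({u, x, y} : Set A.Vert), A.adj v z := fun z hz => (hnbrs ▸ hz).1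
  exact ⟨u, x, hu, hx, hadj u (by simp), hadj x (by simp), hux⟩

lemma exists_isActiveTriangle_one :
    ∃ a b c, A.IsActiveTriangle 1 a b c ∧ ∀ v, A.gen v = 1 → v = a ∨ v = b ∨ v = c := by
  obtain ⟨a, b, c, hab, hac, hbc, hU⟩ := A.U1_card
  have hgen : ∀ z ∈ ({a, b, c} : Set A.Vert), A.gen z = 1 := fun z hz => (hU ▸ hz :)
  have ha := hgen a (by simp)
  have hb := hgen b (by simp)
  have hc := hgen c (by simp)
  refine ⟨a, b, c, ⟨ha, hb.le, hc.le, A.U1_complete a b ha hb hab,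
    A.U1_complete a c ha hc hac, A.U1_complete b c hb hc hbc⟩, fun v hv => ?_⟩
  have : v ∈ ({a, b, c} : Set A.Vert) := hU ▸ hv
  simpa using this

lemma exists_isActiveTriangle_of_gen_le {j : ℕ} (hj : 1 ≤ j) {v : A.Vert} (hv : A.gen v ≤ j) :
    ∃ u x y, A.IsActiveTriangle j u x y ∧ (v = u ∨ v = x ∨ v = y) := by
  induction j, hj using Nat.le_induction generalizing v with
  | base =>
    obtain ⟨a, b, c, habc, hmem⟩ := A.exists_isActiveTriangle_one
    exact ⟨a, b, c, habc, hmem v (le_antisymm hv (A.gen_pos v))⟩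
  | succ j hj ih =>
    rcases Nat.lt_or_ge j (A.gen v) with hvj | hvj
    · obtain ⟨u, x, hu, hx, hvu, hvx, hux⟩ := A.exists_adj_parent v (by omega)
      exact ⟨v, u, x, ⟨by omega, by omega, by omega, hvu, hvx, hux⟩, Or.inl rfl⟩
    · obtain ⟨u, x, y, htri, hmem⟩ := ih hvj
      obtain ⟨w, hw, hwu, hwx, hwy⟩ := htri.exists_adj_gen_succ hj
      obtain ⟨hu, hx, hy, hux, huy, -⟩ := htri
      rcases hmem with rfl | rfl | rfl
      · exact ⟨w, v, x, ⟨hw, by omega, by omega, hwu, hwx, hux⟩, Or.inr (Or.inl rfl)⟩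
      · exact ⟨w, u, v, ⟨hw, by omega, by omega, hwu, hwx, hux⟩, Or.inr (Or.inr rfl)⟩
      · exact ⟨w, u, v, ⟨hw, by omega, by omega, hwu, hwy, huy⟩, Or.inr (Or.inr rfl)⟩

end ApollonianNetwork

theorem stmt11 (A : ApollonianNetwork) (k : ℕ) (hk : 2 ≤ k) :
    ∀ v : A.Vert, A.gen v ≤ k → A.gen v ≠ k - 1 →
      ∃ u : A.Vert, A.gen u = k - 1 ∧ A.adj v u := by
  intro v hv hne
  rcases eq_or_ne (A.gen v) k with hvk | hvk
  · obtain ⟨u, -, hu, -, hvu, -, -⟩ := A.exists_adj_parent v (by omega)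
    exact ⟨u, by omega, hvu⟩
  · have hv1 := A.gen_pos v
    obtain ⟨u, x, y, htri, hmem⟩ :=
      A.exists_isActiveTriangle_of_gen_le (j := k - 2) (by omega) (v := v) (by omega)
    obtain ⟨w, hw, hwu, hwx, hwy⟩ := htri.exists_adj_gen_succ (by omega)
    refine ⟨w, by omega, A.adj_symm w v ?_⟩
    rcases hmem with rfl | rfl | rfl <;> assumption
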